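/- Bijection between disaggregation and virtual-link formulations: the map sending (d, δ) with δ_n ≥ 0 and ∑_{n∈N_d} δ_n ≤ d ≤ d̄ to the disaggregated loads d_{n_h} = d − ∑_n δ_n, d_n = δ_n (n ≠ n_h) is a bijection onto the set {(d_n)_{n∈N_d} : d_n ≥ 0, ∑_n d_n ≤ d̄}, and it preserves the total load ∑_n d_n = d and the objective value; hence the two market clearing formulations have equal optimal values. -/
import Mathlib


open Finset

/-- Bijection between the virtual-link formulation and the load
disaggregation formulation, preserving total load and objective values; hence
both market clearing formulations have equal optimal values. -/
theorem disaggregation_virtual_link_bijection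
    {Nd : Type*} [Fintype Nd] [DecidableEq Nd] (nh : Nd) (dbar : ℝ) (hdbar : 0 ≤ dbar)
    (A : Set (ℝ × (Nd → ℝ)))
    (hA : A = { x : ℝ × (Nd → ℝ) | 0 ≤ x.1 ∧ x.1 ≤ dbar ∧ (∀ n, 0 ≤ x.2 n) ∧
        x.2 nh = 0 ∧ 0 ≤ x.1 - ∑ n : Nd, x.2 n })
    (B : Set (Nd → ℝ))
    (hB : B = { dv : Nd → ℝ | (∀ n, 0 ≤ dv n) ∧ ∑ n : Nd, dv n ≤ dbar })
    (F : ℝ × (Nd → ℝ) → (Nd → ℝ))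
    (hF : ∀ x : ℝ × (Nd → ℝ), ∀ n : Nd,
      F x n = if n = nh then x.1 - ∑ m : Nd, x.2 m else x.2 n) :
    Set.BijOn F A B ∧
    (∀ x ∈ A, ∑ n : Nd, F x n = x.1) ∧
    (∀ obj : (Nd → ℝ) → ℝ, (fun x => obj (F x)) '' A = obj '' B ∧
      sInf ((fun x => obj (F x)) '' A) = sInf (obj '' B)) := by
  -- total load preservation
  have hsum : ∀ x : ℝ × (Nd → ℝ), x.2 nh = 0 → ∑ n : Nd, F x n = x.1 := by
    intro x hx0
    have : ∑ n : Nd, F x n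
        = ∑ n : Nd, ((if n = nh then x.1 - ∑ m : Nd, x.2 m else 0) +
            (if n = nh then 0 else x.2 n)) := by
      refine Finset.sum_congr rfl fun n _ => ?_
      rw [hF]
      by_cases h : n = nh <;> simp [h]
    rw [this, Finset.sum_add_distrib, Finset.sum_ite_eq' univ nh
      (fun _ => x.1 - ∑ m : Nd, x.2 m)]
    simp only [Finset.mem_univ, if_true]
    have h2 : ∑ n : Nd, (if n = nh then 0 else x.2 n) = ∑ n : Nd, x.2 n := by
      refine Finset.sum_congr rfl fun n _ => ?_
      by_cases h : n = nh
      · simp [h, hx0]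
      · simp [h]
    rw [h2]; ring
  have hmaps : Set.MapsTo F A B := by
    intro x hx
    rw [hA] at hx
    obtain ⟨h1, h2, h3, h4, h5⟩ := hx
    rw [hB]
    refine ⟨fun n => ?_, ?_⟩
    · rw [hF]
      by_cases h : n = nh <;> simp [h, h5, h3 n]
    · rw [hsum x h4]; exact h2
  have hinj : Set.InjOn F A := by
    intro x hx y hy hxy
    rw [hA] at hx hy
    have h2 : x.2 = y.2 := by
      funext n
      by_cases h : n = nh
      · rw [h, hx.2.2.2.1, hy.2.2.2.1]
      · have := congrFun hxy n
        rwa [hF, hF, if_neg h, if_neg h] at this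
    have h1 : x.1 = y.1 := by
      have := hsum x hx.2.2.2.1
      rw [hxy, hsum y hy.2.2.2.1] at this
      exact this.symm
    exact Prod.ext h1 h2
  have hsurj : Set.SurjOn F A B := by
    intro dv hdv
    rw [hB] at hdv
    obtain ⟨hpos, hle⟩ := hdv
    have hs : ∑ n : Nd, (if n = nh then 0 else dv n) = ∑ n : Nd, dv n - dv nh := by
      have key : ∑ n : Nd, (if n = nh then dv n else 0) = dv nh := by simp
      rw [eq_sub_iff_add_eq, ← key, ← Finset.sum_add_distrib]
      refine Finset.sum_congr rfl fun n _ => ?_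
      by_cases h : n = nh <;> simp [h]
    refine ⟨(∑ n : Nd, dv n, fun n => if n = nh then 0 else dv n), ?_, ?_⟩
    · rw [hA]
      refine ⟨Finset.sum_nonneg fun n _ => hpos n, hle, fun n => ?_, by simp, ?_⟩
      · by_cases h : n = nh <;> simp [h, hpos n]
      · simp only [hs]
        have := hpos nh
        linarith
    · funext n
      rw [hF]
      by_cases h : n = nh
      · subst h; simp [hs]
      · simp [h]
  have hbij : Set.BijOn F A B := ⟨hmaps, hinj, hsurj⟩
  refine ⟨hbij, fun x hx => hsum x (by rw [hA] at hx; exact hx.2.2.2.1), fun obj => ?_⟩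
  have himg : (fun x => obj (F x)) '' A = obj '' B := by
    rw [← hbij.image_eq, Set.image_image]
  exact ⟨himg, by rw [himg]⟩
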